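/- arXiv:2604.01100 — 2 statements merged into one kernel-verified Lean document; each statement's English description precedes it below -/
import Mathlib

section
/- Let V be a 3-dimensional real vector space, let β : V → ℝ be a linear functional, and let ω be an alternating bilinear form on V. Define the alternating trilinear form θ (the wedge product β ∧ ω) by θ(X,Y,Z) = β(X)·ω(Y,Z) − β(Y)·ω(X,Z) + β(Z)·ω(X,Y). If θ is not identically zero (i.e. there exist u,v,w ∈ V with θ(u,v,w) ≠ 0), then there exists a unique vector R ∈ V such that β(R) = 1 and ω(R,v) = 0 for every v ∈ V. -/
/-- pointwise existence and uniqueness of the Reeb vector field. -/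
theorem stmt_0 (V : Type*) [AddCommGroup V] [Module ℝ V]
    [FiniteDimensional ℝ V] (hdim : Module.finrank ℝ V = 3)
    (β : V →ₗ[ℝ] ℝ) (ω : V →ₗ[ℝ] V →ₗ[ℝ] ℝ) (halt : ∀ v : V, ω v v = 0)
    (θ : V → V → V → ℝ)
    (hθ : ∀ X Y Z : V, θ X Y Z = β X * ω Y Z - β Y * ω X Z + β Z * ω X Y)
    (hne : ∃ u v w : V, θ u v w ≠ 0) :
    ∃! R : V, β R = 1 ∧ ∀ v : V, ω R v = 0 := by
  obtain ⟨u, v, w, huvw⟩ := hne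
  have skew : ∀ x y : V, ω x y = - ω y x := by
    intro x y
    have h := halt (x + y)
    simp only [map_add, LinearMap.add_apply, halt] at h
    linarith
  set c : ℝ := θ u v w with hc
  have hcne : c ≠ 0 := huvw
  set R : V := c⁻¹ • (ω v w • u - ω u w • v + ω u v • w) with hR
  have hβR : β R = 1 := by
    have : β R = c⁻¹ * (ω v w * β u - ω u w * β v + ω u v * β w) := by
      simp [hR, map_add, map_sub, map_smul, smul_eq_mul]; ring
    have hcv : ω v w * β u - ω u w * β v + ω u v * β w = c := by rw [hc, hθ]; ring
    rw [this, hcv]; exact inv_mul_cancel₀ hcne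
  -- ω R kills u, v, w
  have hωR : ∀ x : V, ω R x = c⁻¹ * (ω v w * ω u x - ω u w * ω v x + ω u v * ω w x) := by
    intro x
    simp [hR, map_add, map_sub, map_smul, LinearMap.add_apply, LinearMap.sub_apply,
      LinearMap.smul_apply, smul_eq_mul]
    ring
  have hRu : ω R u = 0 := by
    rw [hωR]; rw [halt u, skew v u, skew w u]; ring
  have hRv : ω R v = 0 := by
    rw [hωR]; rw [halt v, skew w v]; ring
  have hRw : ω R w = 0 := by
    rw [hωR]; rw [halt w]; ring
  -- u, v, w span V
  have hli : LinearIndependent ℝ ![u, v, w] := by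
    rw [Fintype.linearIndependent_iff]
    intro g hg
    rw [Fin.sum_univ_three] at hg
    simp only [Matrix.cons_val_zero, Matrix.cons_val_one, Matrix.head_cons,
      Matrix.cons_val_two, Matrix.tail_cons] at hg
    -- apply the three "coordinate" functionals built from θ
    have h0 : θ (g 0 • u + g 1 • v + g 2 • w) v w = g 0 * c := by
      simp only [hθ, hc, map_add, map_smul, LinearMap.add_apply, LinearMap.smul_apply,
        smul_eq_mul, halt, skew w v, skew w u, skew v u]
      ring
    have h1 : θ u (g 0 • u + g 1 • v + g 2 • w) w = g 1 * c := by
      simp only [hθ, hc, map_add, map_smul, LinearMap.add_apply, LinearMap.smul_apply,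
        smul_eq_mul, halt, skew w v, skew w u, skew v u]
      ring
    have h2 : θ u v (g 0 • u + g 1 • v + g 2 • w) = g 2 * c := by
      simp only [hθ, hc, map_add, map_smul, LinearMap.add_apply, LinearMap.smul_apply,
        smul_eq_mul, halt, skew w v, skew w u, skew v u]
      ring
    rw [hg] at h0 h1 h2
    simp only [hθ, map_zero, LinearMap.zero_apply, zero_mul, mul_zero, sub_zero,
      add_zero, zero_sub, neg_zero] at h0 h1 h2
    intro i
    fin_cases i
    · exact (mul_eq_zero.mp h0.symm).resolve_right hcne
    · exact (mul_eq_zero.mp h1.symm).resolve_right hcne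
    · exact (mul_eq_zero.mp h2.symm).resolve_right hcne
  have hspan : Submodule.span ℝ (Set.range ![u, v, w]) = ⊤ :=
    hli.span_eq_top_of_card_eq_finrank (by simp [hdim])
  -- any vector killed by β and ω is zero
  have hkill : ∀ d : V, β d = 0 → (∀ x : V, ω d x = 0) → d = 0 := by
    intro d hβd hωd
    have hmem : d ∈ Submodule.span ℝ (Set.range ![u, v, w]) := by
      rw [hspan]; trivial
    obtain ⟨g, hg⟩ := (Submodule.mem_span_range_iff_exists_fun ℝ).mp hmem
    rw [Fin.sum_univ_three] at hg
    simp only [Matrix.cons_val_zero, Matrix.cons_val_one, Matrix.head_cons,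
      Matrix.cons_val_two, Matrix.tail_cons] at hg
    have h0 : θ d v w = g 0 * c := by
      rw [← hg]
      simp only [hθ, hc, map_add, map_smul, LinearMap.add_apply, LinearMap.smul_apply,
        smul_eq_mul, halt, skew w v, skew w u, skew v u]
      ring
    have h1 : θ u d w = g 1 * c := by
      rw [← hg]
      simp only [hθ, hc, map_add, map_smul, LinearMap.add_apply, LinearMap.smul_apply,
        smul_eq_mul, halt, skew w v, skew w u, skew v u]
      ring
    have h2 : θ u v d = g 2 * c := by
      rw [← hg]
      simp only [hθ, hc, map_add, map_smul, LinearMap.add_apply, LinearMap.smul_apply,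
        smul_eq_mul, halt, skew w v, skew w u, skew v u]
      ring
    have e0 : θ d v w = 0 := by
      simp only [hθ, hβd, hωd, skew u d, skew v d]; ring
    have e1 : θ u d w = 0 := by
      simp only [hθ, hβd, hωd, skew u d, skew v d, neg_zero]; ring
    have e2 : θ u v d = 0 := by
      simp only [hθ, hβd, hωd, skew u d, skew v d, neg_zero]; ring
    have g0 : g 0 = 0 := by
      rw [e0] at h0; exact (mul_eq_zero.mp h0.symm).resolve_right hcne
    have g1 : g 1 = 0 := by
      rw [e1] at h1; exact (mul_eq_zero.mp h1.symm).resolve_right hcne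
    have g2 : g 2 = 0 := by
      rw [e2] at h2; exact (mul_eq_zero.mp h2.symm).resolve_right hcne
    rw [← hg, g0, g1, g2]
    simp
  refine ⟨R, ⟨hβR, ?_⟩, ?_⟩
  · -- ω R x = 0 for all x, via spanning
    intro x
    have hmem : x ∈ Submodule.span ℝ (Set.range ![u, v, w]) := by
      rw [hspan]; trivial
    obtain ⟨g, hg⟩ := (Submodule.mem_span_range_iff_exists_fun ℝ).mp hmem
    rw [Fin.sum_univ_three] at hg
    simp only [Matrix.cons_val_zero, Matrix.cons_val_one, Matrix.head_cons,
      Matrix.cons_val_two, Matrix.tail_cons] at hg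
    rw [← hg]
    simp [map_add, map_smul, hRu, hRv, hRw]
  · rintro R' ⟨hβR', hωR'⟩
    have hd : R' - R = 0 := by
      apply hkill
      · rw [map_sub, hβR, hβR']; ring
      · intro x
        have : ω (R' - R) x = ω R' x - ω R x := by
          simp [map_sub]
        rw [this, hωR' x]
        have hRx : ω R x = 0 := by
          have hmem : x ∈ Submodule.span ℝ (Set.range ![u, v, w]) := by
            rw [hspan]; trivial
          obtain ⟨g, hg⟩ := (Submodule.mem_span_range_iff_exists_fun ℝ).mp hmem
          rw [Fin.sum_univ_three] at hg
          simp only [Matrix.cons_val_zero, Matrix.cons_val_one, Matrix.head_cons,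
            Matrix.cons_val_two, Matrix.tail_cons] at hg
          rw [← hg]
          simp [map_add, map_smul, hRu, hRv, hRw]
        rw [hRx]; ring
    have := sub_eq_zero.mp hd
    exact this
end

section
/- For ε ∈ ℝ, define u_ε(x) = ε·sin(2πx), U_ε(x) = ε·x·sin(2πx) + (ε/(2π))·(cos(2πx) − 1), and H_ε : ℝ³ → ℝ³ by H_ε(x,y,z) = (x, y + u_ε(x), z + U_ε(x)). For integers m, n, k, define the deck transformation T_{m,n,k} : ℝ³ → ℝ³ by T_{m,n,k}(x,y,z) = (x+m, y+n, z+k+m·y+m·n/2). Then for every ε ∈ ℝ, all integers m, n, k, and every p ∈ ℝ³, one has H_ε(T_{m,n,k}(p)) = T_{m,n,k}(H_ε(p)). -/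
/-- `u_ε(x) = ε sin(2πx)`. -/
noncomputable def uEps (ε x : ℝ) : ℝ := ε * Real.sin (2 * Real.pi * x)

/-- `U_ε(x) = ε x sin(2πx) + (ε/(2π))(cos(2πx) - 1)`. -/
noncomputable def UEps (ε x : ℝ) : ℝ :=
  ε * x * Real.sin (2 * Real.pi * x) + (ε / (2 * Real.pi)) * (Real.cos (2 * Real.pi * x) - 1)

/-- The shear map `H_ε(x,y,z) = (x, y + u_ε(x), z + U_ε(x))`. -/
noncomputable def Hmap (ε : ℝ) (p : ℝ × ℝ × ℝ) : ℝ × ℝ × ℝ :=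
  (p.1, p.2.1 + uEps ε p.1, p.2.2 + UEps ε p.1)

/-- The deck transformation `T_{m,n,k}(x,y,z) = (x+m, y+n, z+k+my+mn/2)` of the covering
`ℝ³ →` Heisenberg manifold. -/
noncomputable def deck (m n k : ℤ) (p : ℝ × ℝ × ℝ) : ℝ × ℝ × ℝ :=
  (p.1 + m, p.2.1 + n, p.2.2 + k + m * p.2.1 + m * n / 2)

lemma sin_per (m : ℤ) (x : ℝ) :
    Real.sin (2 * Real.pi * (x + m)) = Real.sin (2 * Real.pi * x) := by
  have : 2 * Real.pi * (x + m) = 2 * Real.pi * x + m * (2 * Real.pi) := by ring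
  rw [this, Real.sin_add_int_mul_two_pi]

lemma cos_per (m : ℤ) (x : ℝ) :
    Real.cos (2 * Real.pi * (x + m)) = Real.cos (2 * Real.pi * x) := by
  have : 2 * Real.pi * (x + m) = 2 * Real.pi * x + m * (2 * Real.pi) := by ring
  rw [this, Real.cos_add_int_mul_two_pi]

/-- `H_ε` commutes with all deck transformations, hence descends to the
Heisenberg manifold. -/
theorem stmt_11 (ε : ℝ) (m n k : ℤ) (p : ℝ × ℝ × ℝ) :
    Hmap ε (deck m n k p) = deck m n k (Hmap ε p) := by
  obtain ⟨x, y, z⟩ := p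
  simp only [Hmap, deck, uEps, UEps, sin_per, cos_per, Prod.mk.injEq]
  exact ⟨trivial, by ring, by ring⟩
end
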